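/- Let x ∈ ℝⁿ be decomposed as x = Π_u x + Π₁Π_s x + Π₂Π_s x, where ‖Π_u x‖ = ‖R₁x‖, ‖Π_s x‖ = ‖R₂x‖, Π₁ and Π₂ are complementary orthogonal projectors, and Π_u x lies in range(Π₁). If ‖R₁x‖/‖R₂x‖ > γ_ω > 1, then ‖Π₁x‖/‖x‖ > 1 − 2/(γ_ω − 1) and ‖Π₂x‖/‖x‖ < 1/(γ_ω − 1). -/

import Mathlib

open Matrix

/-- Euclidean norm of a vector in `ℝⁿ`. -/
noncomputable def evnorm {n : ℕ} (x : Fin n → ℝ) : ℝ :=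
  ‖(WithLp.equiv 2 (Fin n → ℝ)).symm x‖

/-!
Since `Π_u x ∈ range Π₁` and `Π₂ Π₁ = 0`, we get `Π₂ x = Π₂ Π_s x`, so `‖Π₂ x‖ ≤ ‖Π_s x‖ = ‖R₂ x‖`.
On the other hand `‖x‖ ≥ ‖Π_u x‖ - ‖Π_s x‖ = ‖R₁ x‖ - ‖R₂ x‖ > (γ_ω - 1) ‖R₂ x‖`, which gives the
bound on `‖Π₂ x‖ / ‖x‖`; the bound on `‖Π₁ x‖ / ‖x‖` follows from `x = Π₁ x + Π₂ x`.
-/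

section Norms

variable {E : Type*} [SeminormedAddCommGroup E]

lemma sub_one_mul_norm_lt_norm_add {u s : E} {γ : ℝ} (h : γ * ‖s‖ < ‖u‖) :
    (γ - 1) * ‖s‖ < ‖u + s‖ := by
  have : ‖u‖ ≤ ‖u + s‖ + ‖s‖ := by simpa using norm_sub_le (u + s) s
  linarith

lemma one_sub_div_norm_le_div_norm {x y₁ y₂ : E} (hx : 0 < ‖x‖) (hy : x = y₁ + y₂) :
    1 - ‖y₂‖ / ‖x‖ ≤ ‖y₁‖ / ‖x‖ := by
  rw [one_sub_div hx.ne', div_le_div_iff_of_pos_right hx, sub_le_iff_le_add, hy]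
  exact norm_add_le y₁ y₂

lemma ratio_bounds_of_norm_le {x y₁ y₂ : E} {b γ : ℝ} (hγ : 1 < γ) (hx : (γ - 1) * b < ‖x‖)
    (hy : x = y₁ + y₂) (hy₂ : ‖y₂‖ ≤ b) :
    1 - 2 / (γ - 1) < ‖y₁‖ / ‖x‖ ∧ ‖y₂‖ / ‖x‖ < 1 / (γ - 1) := by
  have hγ₁ : 0 < γ - 1 := sub_pos.2 hγ
  have hx₀ : 0 < ‖x‖ := lt_of_le_of_lt (by nlinarith [norm_nonneg y₂]) hx
  have h₂ : ‖y₂‖ / ‖x‖ < 1 / (γ - 1) := by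
    rw [div_lt_div_iff₀ hx₀ hγ₁]
    nlinarith
  refine ⟨?_, h₂⟩
  calc 1 - 2 / (γ - 1) < 1 - 1 / (γ - 1) := by gcongr; norm_num
    _ < 1 - ‖y₂‖ / ‖x‖ := by linarith
    _ ≤ ‖y₁‖ / ‖x‖ := one_sub_div_norm_le_div_norm hx₀ hy

end Norms

section Projections

variable {m k : Type*} [Fintype m] [Fintype k]

open scoped Matrix.Norms.L2Operator

lemma Matrix.l2_opNorm_one_le [DecidableEq k] : ‖(1 : Matrix k k ℝ)‖ ≤ 1 := by
  rw [← diagonal_one, l2_opNorm_diagonal]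
  exact (pi_norm_le_iff_of_nonneg zero_le_one).2 fun _ => by simp

lemma Matrix.l2_opNorm_le_one_of_transpose_mul_self_eq_one [DecidableEq k] {P : Matrix m k ℝ}
    (hP : Pᵀ * P = 1) : ‖P‖ ≤ 1 := by
  have : ‖P‖ * ‖P‖ ≤ 1 := by
    rw [← l2_opNorm_conjTranspose_mul_self, conjTranspose_eq_transpose_of_trivial, hP]
    exact l2_opNorm_one_le
  nlinarith [norm_nonneg P]

lemma Matrix.l2_opNorm_mul_transpose_le_one [DecidableEq m] [DecidableEq k] {P : Matrix m k ℝ}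
    (hP : Pᵀ * P = 1) : ‖P * Pᵀ‖ ≤ 1 := by
  have hPnorm := l2_opNorm_le_one_of_transpose_mul_self_eq_one hP
  have hPt : ‖Pᵀ‖ ≤ 1 := by
    rwa [← conjTranspose_eq_transpose_of_trivial, l2_opNorm_conjTranspose]
  calc ‖P * Pᵀ‖ ≤ ‖P‖ * ‖Pᵀ‖ := l2_opNorm_mul P Pᵀ
    _ ≤ 1 := mul_le_one₀ hPnorm (norm_nonneg _) hPt

lemma Matrix.mul_transpose_mulVec_eq_zero {R : Type*} [CommSemiring R] {l : Type*} [Fintype l]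
    {P₁ : Matrix m k R} {P₂ : Matrix m l R} (horth : P₁ᵀ * P₂ = 0) {v : m → R}
    (hv : (P₁ * P₁ᵀ) *ᵥ v = v) : (P₂ * P₂ᵀ) *ᵥ v = 0 := by
  have h : P₂ᵀ * P₁ = 0 := by simpa using congrArg transpose horth
  rw [← hv, mulVec_mulVec, Matrix.mul_assoc, ← Matrix.mul_assoc P₂ᵀ, h, Matrix.zero_mul,
    Matrix.mul_zero, zero_mulVec]

end Projections

lemma evnorm_eq_norm_toLp {n : ℕ} (x : Fin n → ℝ) : evnorm x = ‖WithLp.toLp 2 x‖ := rfl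

open scoped Matrix.Norms.L2Operator in
lemma evnorm_mul_transpose_mulVec_le {n k : ℕ} {P : Matrix (Fin n) (Fin k) ℝ}
    (hP : Pᵀ * P = 1) (y : Fin n → ℝ) : evnorm ((P * Pᵀ) *ᵥ y) ≤ evnorm y :=
  calc evnorm ((P * Pᵀ) *ᵥ y) ≤ ‖P * Pᵀ‖ * evnorm y := l2_opNorm_mulVec _ (WithLp.toLp 2 y)
    _ ≤ evnorm y := mul_le_of_le_one_left (norm_nonneg _) (l2_opNorm_mul_transpose_le_one hP)

theorem projection_ratio_bounds_general {n k m : ℕ}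
    (P₁ : Matrix (Fin n) (Fin k) ℝ) (P₂ : Matrix (Fin n) (Fin m) ℝ)
    (hP₂ : P₂ᵀ * P₂ = 1) (horth : P₁ᵀ * P₂ = 0)
    (hcomp : P₁ * P₁ᵀ + P₂ * P₂ᵀ = 1)
    (R₁ : Matrix (Fin k) (Fin n) ℝ) (R₂ : Matrix (Fin m) (Fin n) ℝ)
    (x xu xs : Fin n → ℝ)
    (hdec : x = xu + xs)
    (hxu : (P₁ * P₁ᵀ) *ᵥ xu = xu)
    (hnu : evnorm xu = evnorm (R₁ *ᵥ x)) (hns : evnorm xs = evnorm (R₂ *ᵥ x))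
    (γω : ℝ) (hγ : 1 < γω)
    (hratio : γω < evnorm (R₁ *ᵥ x) / evnorm (R₂ *ᵥ x)) :
    1 - 2 / (γω - 1) < evnorm ((P₁ * P₁ᵀ) *ᵥ x) / evnorm x ∧
      evnorm ((P₂ * P₂ᵀ) *ᵥ x) / evnorm x < 1 / (γω - 1) := by
  have hb : 0 < evnorm (R₂ *ᵥ x) := by
    refine (norm_nonneg _).lt_of_ne fun h => ?_
    rw [show evnorm (R₂ *ᵥ x) = 0 from h.symm, div_zero] at hratio
    linarith
  have hu : γω * evnorm xs < evnorm xu := by rwa [hnu, hns, ← lt_div_iff₀ hb]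
  have hx : (γω - 1) * evnorm xs < evnorm x := by
    rw [hdec, evnorm_eq_norm_toLp (xu + xs), WithLp.toLp_add]
    exact sub_one_mul_norm_lt_norm_add hu
  have hproj₂ : evnorm ((P₂ * P₂ᵀ) *ᵥ x) ≤ evnorm xs := by
    rw [hdec, mulVec_add, mul_transpose_mulVec_eq_zero horth hxu, zero_add]
    exact evnorm_mul_transpose_mulVec_le hP₂ xs
  have hsplit : WithLp.toLp 2 x =
      WithLp.toLp 2 ((P₁ * P₁ᵀ) *ᵥ x) + WithLp.toLp 2 ((P₂ * P₂ᵀ) *ᵥ x) := by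
    rw [← WithLp.toLp_add, ← add_mulVec, hcomp, one_mulVec]
  exact ratio_bounds_of_norm_le hγ hx hsplit hproj₂

/-- With `x = Π_u x + Π₁ Π_s x + Π₂ Π_s x`, where `Π₁ = P₁P₁ᵀ`, `Π₂ = P₂P₂ᵀ` are
complementary orthogonal projectors, `Π_u x ∈ range Π₁`, `‖Π_u x‖ = ‖R₁ x‖`,
`‖Π_s x‖ = ‖R₂ x‖`, and `‖R₁ x‖/‖R₂ x‖ > γ_ω > 1`, we have
`‖Π₁ x‖/‖x‖ > 1 - 2/(γ_ω - 1)` and `‖Π₂ x‖/‖x‖ < 1/(γ_ω - 1)`. -/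
theorem projection_ratio_bounds {n k m : ℕ}
    (P₁ : Matrix (Fin n) (Fin k) ℝ) (P₂ : Matrix (Fin n) (Fin m) ℝ)
    (hP₁ : P₁ᵀ * P₁ = 1) (hP₂ : P₂ᵀ * P₂ = 1) (horth : P₁ᵀ * P₂ = 0)
    (hcomp : P₁ * P₁ᵀ + P₂ * P₂ᵀ = 1)
    (R₁ : Matrix (Fin k) (Fin n) ℝ) (R₂ : Matrix (Fin m) (Fin n) ℝ)
    (x xu xs : Fin n → ℝ)
    (hdec : x = xu + xs)
    (hxu : (P₁ * P₁ᵀ) *ᵥ xu = xu)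
    (hnu : evnorm xu = evnorm (R₁ *ᵥ x)) (hns : evnorm xs = evnorm (R₂ *ᵥ x))
    (γω : ℝ) (hγ : 1 < γω)
    (hratio : γω < evnorm (R₁ *ᵥ x) / evnorm (R₂ *ᵥ x)) :
    1 - 2 / (γω - 1) < evnorm ((P₁ * P₁ᵀ) *ᵥ x) / evnorm x ∧
      evnorm ((P₂ * P₂ᵀ) *ᵥ x) / evnorm x < 1 / (γω - 1) :=
  projection_ratio_bounds_general P₁ P₂ hP₂ horth hcomp R₁ R₂ x xu xs hdec hxu hnu hns γω hγ hratio
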